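/- For every integer n ≥ 2 and all spanners S, S' ∈ X of the graph G_n with S ≠ S', the value vectors f(S) = (f1(S), f2(S)) and f(S') = (f1(S'), f2(S')) are distinct, and neither dominates the other. -/

import Mathlib

namespace MSpPaper

open SimpleGraph

variable {V : Type*}

/-- Minimum total `c2`-weight of a walk from `u` to `v` using only edges in `F`
(the set of weights of such walks is a set of naturals; its infimum is `0` when no walk exists). -/
noncomputable def wdist (F : Set (Sym2 V)) (c2 : Sym2 V → ℕ) (u v : V) : ℕ :=
  sInf (Set.range fun p : (SimpleGraph.fromEdgeSet F).Walk u v => (p.edges.map c2).sum)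

/-- `S` is a spanner of `G`: a subset of the edges such that the resulting subgraph is connected. -/
def IsSpanner (G : SimpleGraph V) (S : Set (Sym2 V)) : Prop :=
  S ⊆ G.edgeSet ∧ (SimpleGraph.fromEdgeSet S).Connected

/-- First objective: total `c1`-cost of the spanner. -/
def f1 (c1 : Sym2 V → ℤ) (S : Finset (Sym2 V)) : ℤ := ∑ e ∈ S, c1 e

open scoped Classical in
/-- Second objective (stretch factor): maximum over pairs of distinct vertices of the
distance ratio `d^S(u,v)/d^E(u,v)` (junk value `0` if there is no pair of distinct vertices). -/
noncomputable def f2 [Fintype V] (E S : Set (Sym2 V)) (c2 : Sym2 V → ℕ) : ℚ :=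
  if h : ((Finset.univ : Finset (V × V)).filter fun p => p.1 ≠ p.2).Nonempty then
    ((Finset.univ : Finset (V × V)).filter fun p => p.1 ≠ p.2).sup' h
      (fun p => (wdist S c2 p.1 p.2 : ℚ) / (wdist E c2 p.1 p.2 : ℚ))
  else 0

/-- The value vector of a spanner. -/
noncomputable def valueVec [Fintype V] (G : SimpleGraph V) (c1 : Sym2 V → ℤ) (c2 : Sym2 V → ℕ)
    (S : Finset (Sym2 V)) : ℚ × ℚ :=
  ((f1 c1 S : ℚ), f2 G.edgeSet (↑S) c2)

/-- `y'` dominates `y`: componentwise `≤` and unequal. -/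
def Dominates (y' y : ℚ × ℚ) : Prop := y' ≤ y ∧ y' ≠ y

/-- The non-dominated set of an MSp instance. -/
def YN [Fintype V] (G : SimpleGraph V) (c1 : Sym2 V → ℤ) (c2 : Sym2 V → ℕ) : Set (ℚ × ℚ) :=
  {y | (∃ S : Finset (Sym2 V), IsSpanner G (↑S) ∧ valueVec G c1 c2 S = y) ∧
       ∀ S' : Finset (Sym2 V), IsSpanner G (↑S') → ¬ Dominates (valueVec G c1 c2 S') y}


/-! ### The family of instances `G_n` from Section 3 -/

/-- Vertices of `G_n`: for each `i`, the vertex `(i,0)` is `v_i`, `(i,1)` is `v_i'`,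
and `(i,2)` is `w_i`. -/
abbrev Vtx (n : ℕ) := Fin n × Fin 3

/-- The weights `(c1, c2)` of the (ordered) pair `a b` of vertices of `G_n`;
`(0, 0)` (in particular `c2 = 0`) marks non-edges. -/
def wtG (n : ℕ) (a b : Vtx n) : ℤ × ℕ :=
  if a.2 = 0 ∧ b.2 = 2 ∧ a.1 = b.1 then (2 ^ ((a.1 : ℕ) + 1), 2 ^ ((a.1 : ℕ) + 1))
  else if a.2 = 0 ∧ b.2 = 1 ∧ a.1 = b.1 then (0, 2 ^ ((a.1 : ℕ) + 1))
  else if a.2 = 1 ∧ b.2 = 2 ∧ a.1 = b.1 then (0, 2 ^ ((a.1 : ℕ) + 1))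
  else if a.2 = 2 ∧ b.2 = 0 ∧ (b.1 : ℕ) = (a.1 : ℕ) + 1 then (0, 1)
  else if a.2 = 0 ∧ b.2 = 2 ∧ (a.1 : ℕ) = 0 ∧ (b.1 : ℕ) = n - 1 then (2 ^ (n + 1), 1)
  else (0, 0)

/-- The cost function `c1` of `G_n`. -/
def c1G (n : ℕ) : Sym2 (Vtx n) → ℤ :=
  Sym2.lift ⟨fun a b => (wtG n a b).1 + (wtG n b a).1, fun _ _ => add_comm _ _⟩

/-- The length function `c2` of `G_n`. -/
def c2G (n : ℕ) : Sym2 (Vtx n) → ℕ :=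
  Sym2.lift ⟨fun a b => (wtG n a b).2 + (wtG n b a).2, fun _ _ => add_comm _ _⟩

/-- The edge set of `G_n`: exactly the pairs with positive length. -/
def EG (n : ℕ) : Set (Sym2 (Vtx n)) := {e | c2G n e ≠ 0}

/-- The graph `G_n`. -/
def Gn (n : ℕ) : SimpleGraph (Vtx n) := SimpleGraph.fromEdgeSet (EG n)

/-- The vertex `v_i`. -/
def vG (n : ℕ) (i : Fin n) : Vtx n := (i, 0)
/-- The vertex `v_i'`. -/
def pG (n : ℕ) (i : Fin n) : Vtx n := (i, 1)
/-- The vertex `w_i`. -/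
def wG (n : ℕ) (i : Fin n) : Vtx n := (i, 2)
/-- The vertex `s = v_1`. -/
def sG (n : ℕ) (hn : 0 < n) : Vtx n := (⟨0, hn⟩, 0)
/-- The vertex `t = w_n`. -/
def tG (n : ℕ) (hn : 0 < n) : Vtx n := (⟨n - 1, Nat.sub_lt hn one_pos⟩, 2)

/-- Membership in `X`: spanners of `G_n` containing every edge of zero `c1`-cost and
not containing the edge `{s, t}`. -/
def memX (n : ℕ) (hn : 0 < n) (S : Finset (Sym2 (Vtx n))) : Prop :=
  IsSpanner (Gn n) (↑S) ∧ (∀ e ∈ (Gn n).edgeSet, c1G n e = 0 → e ∈ S) ∧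
    s(sG n hn, tG n hn) ∉ S

/-!
A member `S` of `X` is determined by the set `C` of chords `{v_i, w_i}` it contains, and its
cost `∑_{i ∈ C} 2^i` determines `C` (binary expansion), so distinct members have distinct costs.
The stretch factor of `S` is attained at the pair `s, t`, which is joined by an edge of length
`1` in `G_n`: every distance in `S` is at most the length of the path from `s` to `t` that
crosses block `i` along the chord (length `2^i`) if `i ∈ C` and through `v_i'` (length `2^(i+1)`)
otherwise, and a potential that grows by at most the edge length along every edge of `S` shows
that this path is shortest. Hence `f1(S) + f2(S) = ∑_i (2^(i+1) + 1) - 1` on all of `X`, whereas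
domination would strictly decrease this sum.
-/

open Finset

section Distance

variable {F : Set (Sym2 V)} {c2 : Sym2 V → ℕ} {u v w : V}

lemma wdist_le_sum (p : (fromEdgeSet F).Walk u v) : wdist F c2 u v ≤ (p.edges.map c2).sum :=
  Nat.sInf_le ⟨p, rfl⟩

lemma exists_walk_sum_eq_wdist (h : (fromEdgeSet F).Reachable u v) :
    ∃ p : (fromEdgeSet F).Walk u v, (p.edges.map c2).sum = wdist F c2 u v :=
  Nat.sInf_mem (Set.range_nonempty_iff_nonempty.mpr h)

@[simp]
lemma wdist_self : wdist F c2 u u = 0 :=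
  Nat.eq_zero_of_le_zero (by simpa using wdist_le_sum (F := F) (c2 := c2) (.nil : Walk _ u u))

lemma wdist_le_of_mem (he : s(u, v) ∈ F) (huv : u ≠ v) : wdist F c2 u v ≤ c2 s(u, v) := by
  simpa using wdist_le_sum (c2 := c2) (.cons ((fromEdgeSet_adj F).2 ⟨he, huv⟩) .nil)

lemma wdist_comm : wdist F c2 u v = wdist F c2 v u := by
  unfold wdist
  congr 1
  ext x
  constructor <;> rintro ⟨p, rfl⟩ <;> exact ⟨p.reverse, by simp⟩

lemma wdist_triangle (huv : (fromEdgeSet F).Reachable u v) (hvw : (fromEdgeSet F).Reachable v w) :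
    wdist F c2 u w ≤ wdist F c2 u v + wdist F c2 v w := by
  obtain ⟨p, hp⟩ := exists_walk_sum_eq_wdist (c2 := c2) huv
  obtain ⟨q, hq⟩ := exists_walk_sum_eq_wdist (c2 := c2) hvw
  simpa [← hp, ← hq] using wdist_le_sum (c2 := c2) (p.append q)

lemma le_wdist_of_potential (φ : V → ℕ)
    (hφ : ∀ a b, (fromEdgeSet F).Adj a b → φ b ≤ φ a + c2 s(a, b))
    (h : (fromEdgeSet F).Reachable u v) : φ v ≤ φ u + wdist F c2 u v := by
  obtain ⟨p, hp⟩ := exists_walk_sum_eq_wdist (c2 := c2) h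
  rw [← hp]
  clear hp h
  induction p with
  | nil => simp
  | cons hadj q ih =>
    have := hφ _ _ hadj
    simp only [Walk.edges_cons, List.map_cons, List.sum_cons]
    omega

lemma one_le_wdist (hF : ∀ e ∈ F, c2 e ≠ 0) (huv : u ≠ v) (h : (fromEdgeSet F).Reachable u v) :
    1 ≤ wdist F c2 u v := by
  obtain ⟨p, hp⟩ := exists_walk_sum_eq_wdist (c2 := c2) h
  cases p with
  | nil => exact absurd rfl huv
  | cons hadj q =>
    have := hF _ ((fromEdgeSet_adj F).1 hadj).1
    simp only [Walk.edges_cons, List.map_cons, List.sum_cons] at hp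
    omega

lemma f2_eq_wdist [Fintype V] {E S : Set (Sym2 V)} (huv : u ≠ v)
    (hmax : ∀ x y, wdist S c2 x y ≤ wdist S c2 u v) (hE : wdist E c2 u v = 1) :
    f2 E S c2 = wdist S c2 u v := by
  rw [f2, dif_pos ⟨(u, v), by simpa using huv⟩]
  refine le_antisymm (Finset.sup'_le _ _ fun p _ => ?_) ?_
  · obtain hp | hp := Nat.eq_zero_or_pos (wdist E c2 p.1 p.2)
    · simp [hp]
    · exact (div_le_self (by positivity) (by exact_mod_cast hp)).trans
        (by exact_mod_cast hmax p.1 p.2)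
  · simpa [hE] using Finset.le_sup' (fun p : V × V => (wdist S c2 p.1 p.2 : ℚ) / wdist E c2 p.1 p.2)
      (b := (u, v)) (by simpa using huv)

end Distance

lemma Dominates.add_lt {y' y : ℚ × ℚ} (h : Dominates y' y) : y'.1 + y'.2 < y.1 + y.2 := by
  rcases Prod.lt_iff.1 (lt_of_le_of_ne h.1 h.2) with ⟨h1, h2⟩ | ⟨h1, h2⟩ <;> linarith

section Instance

variable {n : ℕ}

def chord (n : ℕ) (i : Fin n) : Sym2 (Vtx n) := s(vG n i, wG n i)

lemma chord_injective : Function.Injective (chord n) := by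
  intro i j h
  simpa [chord, vG, wG] using h

lemma mem_EG_cases {e : Sym2 (Vtx n)} (he : e ∈ EG n) :
    (∃ i, e = chord n i) ∨ (∃ i, e = s(vG n i, pG n i)) ∨ (∃ i, e = s(pG n i, wG n i)) ∨
      (∃ i j : Fin n, (j : ℕ) = i + 1 ∧ e = s(wG n i, vG n j)) ∨
      ∃ h : 0 < n, e = s(sG n h, tG n h) := by
  induction e using Sym2.ind with | _ a b =>
  replace he : (wtG n a b).2 + (wtG n b a).2 ≠ 0 := he
  wlog h : (wtG n a b).2 ≠ 0 generalizing a b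
  · rw [Sym2.eq_swap]
    exact this b a (by omega) (by omega)
  obtain ⟨i, r⟩ := a
  obtain ⟨j, r'⟩ := b
  unfold wtG at h
  split_ifs at h with h1 h2 h3 h4 h5
  · obtain ⟨rfl, rfl, rfl⟩ := h1; exact .inl ⟨i, rfl⟩
  · obtain ⟨rfl, rfl, rfl⟩ := h2; exact .inr (.inl ⟨i, rfl⟩)
  · obtain ⟨rfl, rfl, rfl⟩ := h3; exact .inr (.inr (.inl ⟨i, rfl⟩))
  · obtain ⟨rfl, rfl, h4⟩ := h4; exact .inr (.inr (.inr (.inl ⟨i, j, h4, rfl⟩)))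
  · obtain ⟨rfl, rfl, hi, hj⟩ := h5
    refine .inr (.inr (.inr (.inr ⟨i.pos, ?_⟩)))
    simp only at hi hj
    simp [sG, tG, Fin.ext_iff, hi, hj]
  · exact absurd rfl h

@[simp] lemma c2G_chord (i : Fin n) : c2G n (chord n i) = 2 ^ ((i : ℕ) + 1) := by
  simp [c2G, wtG, chord, vG, wG]

@[simp] lemma c2G_vp (i : Fin n) : c2G n s(vG n i, pG n i) = 2 ^ ((i : ℕ) + 1) := by
  simp [c2G, wtG, vG, pG]

@[simp] lemma c2G_pw (i : Fin n) : c2G n s(pG n i, wG n i) = 2 ^ ((i : ℕ) + 1) := by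
  simp [c2G, wtG, pG, wG]

@[simp] lemma c2G_wv {i j : Fin n} (h : (j : ℕ) = i + 1) : c2G n s(wG n i, vG n j) = 1 := by
  have hji : j ≠ i := by rintro rfl; omega
  simp [c2G, wtG, vG, wG, h, hji]

lemma c2G_st (hn : 2 ≤ n) (hn0 : 0 < n) : c2G n s(sG n hn0, tG n hn0) = 1 := by
  have : (⟨0, hn0⟩ : Fin n) ≠ ⟨n - 1, by omega⟩ := by simp [Fin.ext_iff]; omega
  simp [c2G, wtG, sG, tG, this]

@[simp] lemma c1G_chord (i : Fin n) : c1G n (chord n i) = 2 ^ ((i : ℕ) + 1) := by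
  simp [c1G, wtG, chord, vG, wG]

@[simp] lemma c1G_vp (i : Fin n) : c1G n s(vG n i, pG n i) = 0 := by
  simp [c1G, wtG, vG, pG]

@[simp] lemma c1G_pw (i : Fin n) : c1G n s(pG n i, wG n i) = 0 := by
  simp [c1G, wtG, pG, wG]

@[simp] lemma c1G_wv {i j : Fin n} (h : (j : ℕ) = i + 1) : c1G n s(wG n i, vG n j) = 0 := by
  have hji : j ≠ i := by rintro rfl; omega
  simp [c1G, wtG, vG, wG, h, hji]

lemma mem_edgeSet_Gn {a b : Vtx n} (h : c2G n s(a, b) ≠ 0) (hab : a ≠ b) :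
    s(a, b) ∈ (Gn n).edgeSet := by
  simp [Gn, EG, h, hab]

end Instance

section Spanner

variable {n : ℕ} {hn0 : 0 < n} {S S' : Finset (Sym2 (Vtx n))}

namespace memX

lemma mem_EG (hS : memX n hn0 S) {e : Sym2 (Vtx n)} (he : e ∈ S) : e ∈ EG n := by
  have := hS.1.1 he
  simp only [Gn, edgeSet_fromEdgeSet, Set.mem_sdiff] at this
  exact this.1

lemma vp_mem (hS : memX n hn0 S) (i : Fin n) : s(vG n i, pG n i) ∈ S :=
  hS.2.1 _ (mem_edgeSet_Gn (by simp) (by simp [vG, pG])) (c1G_vp i)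

lemma pw_mem (hS : memX n hn0 S) (i : Fin n) : s(pG n i, wG n i) ∈ S :=
  hS.2.1 _ (mem_edgeSet_Gn (by simp) (by simp [pG, wG])) (c1G_pw i)

lemma wv_mem (hS : memX n hn0 S) {i j : Fin n} (h : (j : ℕ) = i + 1) : s(wG n i, vG n j) ∈ S :=
  hS.2.1 _ (mem_edgeSet_Gn (by simp [h]) (by simp [vG, wG])) (c1G_wv h)

lemma reachable (hS : memX n hn0 S) (x y : Vtx n) :
    (fromEdgeSet (S : Set (Sym2 (Vtx n)))).Reachable x y :=
  hS.1.2.preconnected x y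

lemma wdist_triangle (hS : memX n hn0 S) (x y z : Vtx n) :
    wdist ↑S (c2G n) x z ≤ wdist ↑S (c2G n) x y + wdist ↑S (c2G n) y z :=
  MSpPaper.wdist_triangle (hS.reachable x y) (hS.reachable y z)

lemma wdist_vp_le (hS : memX n hn0 S) (i : Fin n) :
    wdist ↑S (c2G n) (vG n i) (pG n i) ≤ 2 ^ ((i : ℕ) + 1) := by
  simpa using wdist_le_of_mem (c2 := c2G n) (Finset.mem_coe.2 (hS.vp_mem i)) (by simp [vG, pG])

lemma wdist_pw_le (hS : memX n hn0 S) (i : Fin n) :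
    wdist ↑S (c2G n) (pG n i) (wG n i) ≤ 2 ^ ((i : ℕ) + 1) := by
  simpa using wdist_le_of_mem (c2 := c2G n) (Finset.mem_coe.2 (hS.pw_mem i)) (by simp [pG, wG])

lemma wdist_wv_le (hS : memX n hn0 S) {i j : Fin n} (h : (j : ℕ) = i + 1) :
    wdist ↑S (c2G n) (wG n i) (vG n j) ≤ 1 := by
  simpa [h] using wdist_le_of_mem (c2 := c2G n) (Finset.mem_coe.2 (hS.wv_mem h)) (by simp [vG, wG])

end memX

def chordIdx (S : Finset (Sym2 (Vtx n))) : Finset ℕ :=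
  (univ.filter fun i : Fin n => chord n i ∈ S).map Fin.valEmbedding

lemma coe_mem_chordIdx {i : Fin n} : (i : ℕ) ∈ chordIdx S ↔ chord n i ∈ S := by
  simp [chordIdx, Fin.val_inj]

lemma chordIdx_subset_range : chordIdx S ⊆ range n := by
  intro k
  simp only [chordIdx, mem_map, mem_filter, Fin.valEmbedding_apply, mem_range]
  rintro ⟨i, -, rfl⟩
  exact i.isLt

/-- Blocks are indexed from `0`: block `k` is the paper's block `k + 1`. -/
def blockLen (S : Finset (Sym2 (Vtx n))) (k : ℕ) : ℕ :=
  if k ∈ chordIdx S then 2 ^ (k + 1) else 2 ^ (k + 2)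

def offset (S : Finset (Sym2 (Vtx n))) (k : ℕ) : ℕ :=
  ∑ j ∈ range k, (blockLen S j + 1)

/-- The position of a vertex along the shortest `s`–`t` path of `S`. The vertex `v_i'`, which is
off that path when the chord `{v_i, w_i}` is in `S`, is placed halfway through its block. -/
def potential (S : Finset (Sym2 (Vtx n))) (x : Vtx n) : ℕ :=
  offset S x.1 + ![0, blockLen S x.1 / 2, blockLen S x.1] x.2

lemma le_blockLen (k : ℕ) : 2 ^ (k + 1) ≤ blockLen S k := by
  unfold blockLen; split_ifs <;> simp [pow_succ]

lemma blockLen_le (k : ℕ) : blockLen S k ≤ 2 * 2 ^ (k + 1) := by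
  unfold blockLen; split_ifs <;> simp [pow_succ]; ring_nf; omega

lemma blockLen_of_mem {i : Fin n} (h : chord n i ∈ S) : blockLen S i = 2 ^ ((i : ℕ) + 1) := by
  simp [blockLen, coe_mem_chordIdx.2 h]

lemma offset_succ (k : ℕ) : offset S (k + 1) = offset S k + blockLen S k + 1 := by
  simp [offset, sum_range_succ, add_assoc]

lemma offset_mono {k l : ℕ} (h : k ≤ l) : offset S k ≤ offset S l :=
  sum_le_sum_of_subset (range_subset_range.2 h)

lemma sum_chordIdx_add_offset :
    ∑ k ∈ chordIdx S, 2 ^ (k + 1) + offset S n = ∑ k ∈ range n, (2 ^ (k + 2) + 1) := by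
  rw [← inter_eq_right.2 (chordIdx_subset_range (S := S)), ← sum_ite_mem, offset,
    ← sum_add_distrib]
  refine sum_congr rfl fun k _ => ?_
  unfold blockLen
  split_ifs <;> ring

@[simp] lemma potential_vG (i : Fin n) : potential S (vG n i) = offset S i := by
  simp [potential, vG]

@[simp] lemma potential_pG (i : Fin n) : potential S (pG n i) = offset S i + blockLen S i / 2 := by
  simp [potential, pG]

@[simp] lemma potential_wG (i : Fin n) : potential S (wG n i) = offset S i + blockLen S i := by
  simp [potential, wG]

namespace memX

lemma wdist_vw_le (hS : memX n hn0 S) (i : Fin n) :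
    wdist ↑S (c2G n) (vG n i) (wG n i) ≤ blockLen S i := by
  by_cases hc : chord n i ∈ S
  · rw [blockLen_of_mem hc, ← c2G_chord]
    exact wdist_le_of_mem (Finset.mem_coe.2 hc) (by simp [vG, wG])
  · have h1 := hS.wdist_triangle (vG n i) (pG n i) (wG n i)
    have h2 := hS.wdist_vp_le i
    have h3 := hS.wdist_pw_le i
    have : blockLen S i = 2 * 2 ^ ((i : ℕ) + 1) := by
      simp [blockLen, coe_mem_chordIdx, hc, pow_succ]; ring
    omega

lemma wdist_block_le (hS : memX n hn0 S) (i : Fin n) (r r' : Fin 3) :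
    wdist ↑S (c2G n) (i, r) (i, r') ≤ blockLen S i := by
  have hvp := hS.wdist_vp_le i
  have hpw := hS.wdist_pw_le i
  have hvw := hS.wdist_vw_le i
  have := le_blockLen (S := S) i
  simp only [vG, pG, wG] at hvp hpw hvw
  fin_cases r <;> fin_cases r' <;> simp <;> first | omega | (rw [wdist_comm]; omega)

lemma wdist_add_offset_le (hS : memX n hn0 S) (i : Fin n) (r : Fin 3) {j : ℕ}
    (hij : (i : ℕ) ≤ j) (hj : j < n) (r' : Fin 3) :
    wdist ↑S (c2G n) (i, r) (⟨j, hj⟩, r') + offset S i ≤ offset S j + blockLen S j := by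
  induction j, hij using Nat.le_induction generalizing r' with
  | base =>
    have := hS.wdist_block_le i r r'
    simp only [Fin.eta]
    omega
  | succ j hij ih =>
    have hj' : j < n := by omega
    have h1 := ih hj' 2
    have h2 : wdist ↑S (c2G n) (⟨j, hj'⟩, 2) (⟨j + 1, hj⟩, 0) ≤ 1 := hS.wdist_wv_le rfl
    have h3 : wdist ↑S (c2G n) (⟨j + 1, hj⟩, 0) (⟨j + 1, hj⟩, r') ≤ blockLen S (j + 1) :=
      hS.wdist_block_le ⟨j + 1, hj⟩ 0 r'
    have h4 := hS.wdist_triangle (i, r) (⟨j, hj'⟩, 2) (⟨j + 1, hj⟩, 0)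
    have h5 := hS.wdist_triangle (i, r) (⟨j + 1, hj⟩, 0) (⟨j + 1, hj⟩, r')
    have h6 := offset_succ (S := S) j
    omega

lemma wdist_lt_offset (hS : memX n hn0 S) (x y : Vtx n) : wdist ↑S (c2G n) x y < offset S n := by
  wlog hxy : (x.1 : ℕ) ≤ y.1 generalizing x y
  · rw [wdist_comm]; exact this y x (by omega)
  obtain ⟨i, r⟩ := x
  obtain ⟨⟨j, hj⟩, r'⟩ := y
  simp only at hxy
  have h1 := hS.wdist_add_offset_le i r hxy hj r'
  have h2 := offset_succ (S := S) j
  have h3 := offset_mono (S := S) (show j + 1 ≤ n by omega)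
  omega

lemma potential_le_of_adj (hS : memX n hn0 S) {a b : Vtx n}
    (hab : (fromEdgeSet (S : Set (Sym2 (Vtx n)))).Adj a b) :
    potential S b ≤ potential S a + c2G n s(a, b) := by
  obtain ⟨he, -⟩ := (fromEdgeSet_adj _).1 hab
  rcases mem_EG_cases (hS.mem_EG he) with ⟨i, h⟩ | ⟨i, h⟩ | ⟨i, h⟩ | ⟨i, j, hij, h⟩ | ⟨_, h⟩
  · rw [h] at he ⊢
    have := blockLen_of_mem he
    rcases Sym2.eq_iff.1 h with ⟨rfl, rfl⟩ | ⟨rfl, rfl⟩ <;> simp <;> omega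
  · have := blockLen_le (S := S) i
    rw [h]
    rcases Sym2.eq_iff.1 h with ⟨rfl, rfl⟩ | ⟨rfl, rfl⟩ <;> simp <;> omega
  · have := blockLen_le (S := S) i
    rw [h]
    rcases Sym2.eq_iff.1 h with ⟨rfl, rfl⟩ | ⟨rfl, rfl⟩ <;> simp <;> omega
  · have := offset_succ (S := S) i
    rw [h, c2G_wv hij]
    rcases Sym2.eq_iff.1 h with ⟨rfl, rfl⟩ | ⟨rfl, rfl⟩ <;> simp [hij] <;> omega
  · exact absurd (h ▸ he) hS.2.2

lemma wdist_sG_tG_add_one (hS : memX n hn0 S) :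
    wdist ↑S (c2G n) (sG n hn0) (tG n hn0) + 1 = offset S n := by
  have hlow := le_wdist_of_potential (potential S) (fun _ _ => hS.potential_le_of_adj)
    (hS.reachable (sG n hn0) (tG n hn0))
  have hup := hS.wdist_lt_offset (sG n hn0) (tG n hn0)
  have hs : potential S (sG n hn0) = 0 := by simp [potential, sG, offset]
  have ht : potential S (tG n hn0) + 1 = offset S n := by
    have := offset_succ (S := S) (n - 1)
    rw [Nat.sub_add_cancel hn0] at this
    simp [potential, tG]
    omega
  omega

lemma f2_eq (hn : 2 ≤ n) (hS : memX n hn0 S) :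
    f2 (Gn n).edgeSet ↑S (c2G n) = wdist ↑S (c2G n) (sG n hn0) (tG n hn0) := by
  have hst : sG n hn0 ≠ tG n hn0 := by simp [sG, tG]
  have hmem : s(sG n hn0, tG n hn0) ∈ (Gn n).edgeSet :=
    mem_edgeSet_Gn (by rw [c2G_st hn]; omega) hst
  refine f2_eq_wdist hst (fun x y => ?_) (le_antisymm ?_ ?_)
  · have := hS.wdist_lt_offset x y
    have := hS.wdist_sG_tG_add_one
    omega
  · simpa [c2G_st hn] using wdist_le_of_mem (c2 := c2G n) hmem hst
  · refine one_le_wdist (fun e he => ?_) hst ((fromEdgeSet_adj _).2 ⟨hmem, hst⟩).reachable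
    simp only [Gn, edgeSet_fromEdgeSet, Set.mem_sdiff] at he
    exact he.1

lemma f1_eq (hS : memX n hn0 S) :
    f1 (c1G n) S = ((∑ k ∈ chordIdx S, 2 ^ (k + 1) : ℕ) : ℤ) := by
  have hsub : (univ.filter fun i => chord n i ∈ S).image (chord n) ⊆ S := by
    intro e
    simp only [mem_image, mem_filter, mem_univ, true_and]
    rintro ⟨i, hi, rfl⟩
    exact hi
  have hzero : ∀ e ∈ S, e ∉ (univ.filter fun i => chord n i ∈ S).image (chord n) →
      c1G n e = 0 := by
    intro e he hne
    rcases mem_EG_cases (hS.mem_EG he) with ⟨i, rfl⟩ | ⟨i, rfl⟩ | ⟨i, rfl⟩ | ⟨i, j, hij, rfl⟩ |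
      ⟨_, rfl⟩
    · exact absurd (mem_image_of_mem _ (by simpa using he)) hne
    · exact c1G_vp i
    · exact c1G_pw i
    · exact c1G_wv hij
    · exact absurd he hS.2.2
  rw [f1, ← sum_subset hsub hzero, sum_image chord_injective.injOn, chordIdx, sum_map]
  simp

lemma subset_of_chordIdx_subset (hS : memX n hn0 S) (hS' : memX n hn0 S')
    (h : chordIdx S ⊆ chordIdx S') : S ⊆ S' := by
  intro e he
  rcases mem_EG_cases (hS.mem_EG he) with ⟨i, rfl⟩ | ⟨i, rfl⟩ | ⟨i, rfl⟩ | ⟨i, j, hij, rfl⟩ |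
    ⟨_, rfl⟩
  · exact coe_mem_chordIdx.1 (h (coe_mem_chordIdx.2 he))
  · exact hS'.vp_mem i
  · exact hS'.pw_mem i
  · exact hS'.wv_mem hij
  · exact absurd he hS.2.2

lemma eq_of_sum_chordIdx_eq (hS : memX n hn0 S) (hS' : memX n hn0 S')
    (h : ∑ k ∈ chordIdx S, 2 ^ (k + 1) = ∑ k ∈ chordIdx S', 2 ^ (k + 1)) : S = S' := by
  have hC : chordIdx S = chordIdx S' := by
    apply geomSum_injective le_rfl
    simp only [pow_succ, ← sum_mul] at h
    simpa using h
  exact subset_antisymm (hS.subset_of_chordIdx_subset hS' hC.le)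
    (hS'.subset_of_chordIdx_subset hS hC.ge)

lemma valueVec_fst (hS : memX n hn0 S) :
    (valueVec (Gn n) (c1G n) (c2G n) S).1 = ((∑ k ∈ chordIdx S, 2 ^ (k + 1) : ℕ) : ℚ) := by
  simp [valueVec, hS.f1_eq]

lemma valueVec_fst_add_snd (hn : 2 ≤ n) (hS : memX n hn0 S) :
    (valueVec (Gn n) (c1G n) (c2G n) S).1 + (valueVec (Gn n) (c1G n) (c2G n) S).2 + 1 =
      ((∑ k ∈ range n, (2 ^ (k + 2) + 1) : ℕ) : ℚ) := by
  rw [hS.valueVec_fst, ← sum_chordIdx_add_offset, ← hS.wdist_sG_tG_add_one]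
  simp only [valueVec, hS.f2_eq hn]
  push_cast
  ring

end memX

end Spanner

/-- For `n ≥ 2` and distinct spanners `S, S' ∈ X` of `G_n`, the value
vectors `f(S)` and `f(S')` are distinct and neither dominates the other. -/
theorem memX_no_mutual_domination (n : ℕ) (hn : 2 ≤ n) (S S' : Finset (Sym2 (Vtx n)))
    (hS : memX n (by omega) S) (hS' : memX n (by omega) S') (hne : S ≠ S') :
    valueVec (Gn n) (c1G n) (c2G n) S ≠ valueVec (Gn n) (c1G n) (c2G n) S' ∧
      ¬ Dominates (valueVec (Gn n) (c1G n) (c2G n) S) (valueVec (Gn n) (c1G n) (c2G n) S') ∧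
      ¬ Dominates (valueVec (Gn n) (c1G n) (c2G n) S') (valueVec (Gn n) (c1G n) (c2G n) S) := by
  have hsum := (hS.valueVec_fst_add_snd hn).trans (hS'.valueVec_fst_add_snd hn).symm
  have hfst : (valueVec (Gn n) (c1G n) (c2G n) S).1 ≠ (valueVec (Gn n) (c1G n) (c2G n) S').1 := by
    rw [hS.valueVec_fst, hS'.valueVec_fst, Ne, Nat.cast_inj]
    exact fun h => hne (hS.eq_of_sum_chordIdx_eq hS' h)
  exact ⟨fun h => hfst (congrArg Prod.fst h), fun h => by linarith [h.add_lt],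
    fun h => by linarith [h.add_lt]⟩

end MSpPaper
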